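/- Under the hypotheses of the zero curvature proposition, the components A_σ := π_{sh}(𝒢_σ) − 𝒢_σ = −π_−(𝒢_σ) of a solution {𝒢_σ} of the Lax equations also satisfy zero curvature relations: ∂_{σ1}(A_{σ2}) − ∂_{σ2}(A_{σ1}) − [A_{σ1}, A_{σ2}] = 0. -/

import Mathlib

/-!
Write `B_σ = π_sh 𝒢_σ` and `M_σ = π_- 𝒢_σ`, so that `A_σ = -M_σ`. Since the derivations commute
with the projections, `∂₁A₂ - ∂₂A₁ = π_sh X - X` with `X = [B₁, 𝒢₂] - [B₂, 𝒢₁]`. Splitting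
`𝒢 = M + B` and using `[𝒢₁, 𝒢₂] = 0` gives `X = [B₁, B₂] - [M₁, M₂]`; as `L_+` and `L_-` are
Lie subalgebras, `π_sh X = [B₁, B₂]`, hence `∂₁A₂ - ∂₂A₁ = [M₁, M₂] = [A₁, A₂]`.
-/

theorem Commute.units_conj {M : Type*} [Monoid M] (u : Mˣ) {a b : M} (h : Commute a b) :
    Commute (u * a * ↑u⁻¹) (u * b * ↑u⁻¹) := by
  simp only [Commute, SemiconjBy, mul_assoc, Units.inv_mul_cancel_left]
  rw [← mul_assoc a, ← mul_assoc b, h.eq]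

theorem lie_sub_lie_eq_of_commute {L : Type*} [Ring L] {x y m₁ b₁ m₂ b₂ : L}
    (hx : m₁ + b₁ = x) (hy : m₂ + b₂ = y) (hxy : Commute x y) :
    ⁅b₁, y⁆ - ⁅b₂, x⁆ = ⁅b₁, b₂⁆ - ⁅m₁, m₂⁆ := by
  subst hx hy
  have h0 : (m₁ + b₁) * (m₂ + b₂) - (m₂ + b₂) * (m₁ + b₁) = 0 := sub_eq_zero.mpr hxy.eq
  rw [← sub_eq_zero, ← h0]
  simp only [Ring.lie_def]
  noncomm_ring

section Splitting

variable {L : Type*} [Ring L] {πm πsh : L →+ L}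

theorem proj_sh_sub_self (hsum : ∀ x, πm x + πsh x = x) (x : L) : πsh x - x = -πm x := by
  nth_rw 2 [← hsum x]
  abel

theorem proj_sh_eq_zero_of_proj_m_eq (hsum : ∀ x, πm x + πsh x = x) {y : L} (hy : πm y = y) :
    πsh y = 0 := by
  simpa [hy] using hsum y

theorem proj_sh_lie_sub_lie (hsum : ∀ x, πm x + πsh x = x)
    (hsub₁ : ∀ x y, πm ⁅πm x, πm y⁆ = ⁅πm x, πm y⁆)
    (hsub₂ : ∀ x y, πsh ⁅πsh x, πsh y⁆ = ⁅πsh x, πsh y⁆) (x y : L) :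
    πsh (⁅πsh x, πsh y⁆ - ⁅πm x, πm y⁆) = ⁅πsh x, πsh y⁆ := by
  rw [map_sub, hsub₂, proj_sh_eq_zero_of_proj_m_eq hsum (hsub₁ x y), sub_zero]

end Splitting

theorem statement9_general {L : Type*} [Ring L] {Sig : Type*}
    (πm πsh : L →+ L)
    (hsum : ∀ x, πm x + πsh x = x)
    (hsub₁ : ∀ x y, πm (πm x * πm y - πm y * πm x) = πm x * πm y - πm y * πm x)
    (hsub₂ : ∀ x y, πsh (πsh x * πsh y - πsh y * πsh x) = πsh x * πsh y - πsh y * πsh x)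
    (D : Sig → L → L)
    (hDadd : ∀ σ x y, D σ (x + y) = D σ x + D σ y)
    (hDproj : ∀ σ x, D σ (πsh x) = πsh (D σ x))
    (g : Lˣ) (G : Sig → L)
    (hGcomm : ∀ σ τ, G σ * G τ = G τ * G σ)
    (𝒢 : Sig → L) (hconj : ∀ σ, 𝒢 σ = ↑g * G σ * ↑g⁻¹)
    (hlax : ∀ σ₁ σ₂, D σ₁ (𝒢 σ₂) = πsh (𝒢 σ₁) * 𝒢 σ₂ - 𝒢 σ₂ * πsh (𝒢 σ₁)) :
    ∀ σ₁ σ₂, D σ₁ (πsh (𝒢 σ₂) - 𝒢 σ₂) - D σ₂ (πsh (𝒢 σ₁) - 𝒢 σ₁)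
      - ((πsh (𝒢 σ₁) - 𝒢 σ₁) * (πsh (𝒢 σ₂) - 𝒢 σ₂)
         - (πsh (𝒢 σ₂) - 𝒢 σ₂) * (πsh (𝒢 σ₁) - 𝒢 σ₁)) = 0 := by
  simp only [← Ring.lie_def] at hsub₁ hsub₂ hlax ⊢
  intro σ₁ σ₂
  have hD : ∀ σ x, D σ (πsh x - x) = πsh (D σ x) - D σ x := fun σ x =>
    eq_sub_of_add_eq (by rw [← hDadd, sub_add_cancel, hDproj])
  have h𝒢 : Commute (𝒢 σ₁) (𝒢 σ₂) := by
    rw [hconj, hconj]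
    exact Commute.units_conj g (hGcomm σ₁ σ₂)
  have hX : D σ₁ (𝒢 σ₂) - D σ₂ (𝒢 σ₁) = ⁅πsh (𝒢 σ₁), πsh (𝒢 σ₂)⁆ - ⁅πm (𝒢 σ₁), πm (𝒢 σ₂)⁆ := by
    rw [hlax, hlax]
    exact lie_sub_lie_eq_of_commute (hsum _) (hsum _) h𝒢
  rw [sub_eq_zero, hD, hD, sub_sub_sub_comm, ← map_sub, hX,
    proj_sh_lie_sub_lie hsum hsub₁ hsub₂, proj_sh_sub_self hsum, proj_sh_sub_self hsum,
    Ring.lie_def (-_), neg_mul_neg, neg_mul_neg, ← Ring.lie_def]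
  abel

/-- Zero curvature relations for the projections `B_σ = π_{sh}(𝒢_σ)` of a
solution of the Lax equations. `L` is an associative algebra decomposed as a
direct sum of two Lie subalgebras via the complementary projections
`πm = π_-` and `πsh`, with commuting derivations `D σ` acting entrywise
(hence commuting with the projections). -/
theorem statement9 {L : Type*} [Ring L] {Sig : Type*}
    (πm πsh : L →+ L)
    (hsum : ∀ x, πm x + πsh x = x)
    (hid₁ : ∀ x, πm (πm x) = πm x)
    (hid₂ : ∀ x, πsh (πsh x) = πsh x)
    (hmix : ∀ x, πm (πsh x) = 0)
    (hsub₁ : ∀ x y, πm (πm x * πm y - πm y * πm x) = πm x * πm y - πm y * πm x)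
    (hsub₂ : ∀ x y, πsh (πsh x * πsh y - πsh y * πsh x) = πsh x * πsh y - πsh y * πsh x)
    (D : Sig → L → L)
    (hDadd : ∀ σ x y, D σ (x + y) = D σ x + D σ y)
    (hDmul : ∀ σ x y, D σ (x * y) = D σ x * y + x * D σ y)
    (hDcomm : ∀ σ τ x, D σ (D τ x) = D τ (D σ x))
    (hDproj : ∀ σ x, D σ (πsh x) = πsh (D σ x))
    (g : Lˣ) (G : Sig → L)
    (hGcomm : ∀ σ τ, G σ * G τ = G τ * G σ)
    (𝒢 : Sig → L) (hconj : ∀ σ, 𝒢 σ = ↑g * G σ * ↑g⁻¹)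
    (hlax : ∀ σ₁ σ₂, D σ₁ (𝒢 σ₂) = πsh (𝒢 σ₁) * 𝒢 σ₂ - 𝒢 σ₂ * πsh (𝒢 σ₁)) :
    ∀ σ₁ σ₂, D σ₁ (πsh (𝒢 σ₂) - 𝒢 σ₂) - D σ₂ (πsh (𝒢 σ₁) - 𝒢 σ₁)
      - ((πsh (𝒢 σ₁) - 𝒢 σ₁) * (πsh (𝒢 σ₂) - 𝒢 σ₂)
         - (πsh (𝒢 σ₂) - 𝒢 σ₂) * (πsh (𝒢 σ₁) - 𝒢 σ₁)) = 0 :=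
  statement9_general πm πsh hsum hsub₁ hsub₂ D hDadd hDproj g G hGcomm 𝒢 hconj hlax
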